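/- For every n ∈ ℕ, 1 ≤ p ≤ ∞, and every real sequence β̄ = (β_k), one has A_n(p) ≥ ‖ sin((2n−1)x/2) sin(−x/2 + πβ_n/2) ‖_p = (1/2)‖Φ_{n,πβ_n}‖_p (norms in x). -/

import Mathlib

open MeasureTheory Real Set
open scoped ENNReal

/-- The `L_p` "norm" of a (2π-periodic) function over one period `(0, 2π]`. -/
noncomputable def LpNormPer (p : ℝ≥0∞) (f : ℝ → ℝ) : ℝ :=
  (eLpNorm f p (volume.restrict (Ioc (0:ℝ) (2*π)))).toReal

/-- `‖cos t‖_p` over one period. -/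
noncomputable def cosLp (p : ℝ≥0∞) : ℝ := LpNormPer p Real.cos

/-- Admissible `φ`: 2π-periodic, integrable on a period, `φ ⊥ 1`, `‖φ‖₁ ≤ 1`. -/
def AdmPhi (φ : ℝ → ℝ) : Prop :=
  (∀ t : ℝ, φ (t + 2*π) = φ t) ∧ IntegrableOn φ (Ioc (0:ℝ) (2*π)) volume ∧
  (∫ t in (0:ℝ)..(2*π), φ t) = 0 ∧ (∫ t in (0:ℝ)..(2*π), |φ t|) ≤ 1

/-- `Φ_{n,θ}(x) = cos(nx−θ/2)(1−cos(x−θ)) − sin(nx−θ/2)sin(x−θ)`. -/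
noncomputable def PhiF (n : ℕ) (θ : ℝ) : ℝ → ℝ := fun x =>
  Real.cos ((n:ℝ)*x - θ/2) * (1 - Real.cos (x - θ)) -
    Real.sin ((n:ℝ)*x - θ/2) * Real.sin (x - θ)

/-- `A_n(p) = sup { ‖ sin((2n−1)x/2) ∫₀^{2π} sin(nt − x/2 + πβ_n/2) φ(t) dt ‖_p :
φ ⊥ 1, ‖φ‖₁ ≤ 1 }`. -/
noncomputable def Aq (n : ℕ) (p : ℝ≥0∞) (βb : ℕ → ℝ) : ℝ :=
  sSup { a : ℝ | ∃ φ : ℝ → ℝ, AdmPhi φ ∧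
    a = LpNormPer p (fun x => Real.sin ((2*(n:ℝ) - 1) * x / 2) *
          ∫ t in (0:ℝ)..(2*π), Real.sin ((n:ℝ)*t - x/2 + π * βb n / 2) * φ t) }

/-!
Test `A_n(p)` against the periodized `φ = (4h)⁻¹ (𝟙_{[-h,h]} - 𝟙_{[-h,h] + π/n})`. Since
`sin (n t + c)` changes sign under `t ↦ t + π/n`, `∫ sin (n t + c) φ(t) dt = sinc (n h) sin c`,
so `A_n(p) ≥ |sinc (n h)| ‖sin ((2n-1)x/2) sin (-x/2 + πβ_n/2)‖_p` for every `h ∈ (0, π)`;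
let `h → 0⁺`.
The identity with `Φ` is the sum-to-product formula for `cos α - cos β`.
-/

open Filter Topology Function

-- For `0 < h < π`, the periodization of `[a - h, a + h]`; written via `cos` to be `2π`-invariant.
def arc (a h : ℝ) : Set ℝ := {t | cos h ≤ cos (t - a)}

lemma measurableSet_arc (a h : ℝ) : MeasurableSet (arc a h) :=
  measurableSet_le measurable_const (by fun_prop)

lemma arc_zero_inter_Ioc {h : ℝ} (h0 : 0 < h) (hπ : h < π) :
    arc 0 h ∩ Ioc (-π) π = Icc (-h) h := by
  ext t
  simp only [arc, sub_zero, mem_inter_iff, mem_ofPred_eq, mem_Ioc, mem_Icc, ← abs_le]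
  constructor
  · rintro ⟨hcos, ht⟩
    rw [← cos_abs t] at hcos
    by_contra! hlt
    exact (strictAntiOn_cos ⟨h0.le, hπ.le⟩ ⟨abs_nonneg t, abs_le.2 ⟨ht.1.le, ht.2⟩⟩ hlt).not_ge hcos
  · intro ht
    refine ⟨?_, by linarith [abs_le.1 ht], by linarith [abs_le.1 ht]⟩
    rw [← cos_abs t]
    exact cos_le_cos_of_nonneg_of_le_pi (abs_nonneg t) hπ.le ht

lemma Function.Periodic.indicator_arc {F : ℝ → ℝ} (hF : Periodic F (2 * π)) (a h : ℝ) :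
    Periodic ((arc a h).indicator F) (2 * π) := fun t => by
  have hmem : t + 2 * π ∈ arc a h ↔ t ∈ arc a h := by
    simp only [arc, mem_ofPred_eq, show t + 2 * π - a = t - a + 2 * π by ring, cos_add_two_pi]
  by_cases ht : t ∈ arc a h
  · rw [indicator_of_mem (hmem.2 ht), indicator_of_mem ht, hF]
  · rw [indicator_of_notMem (mt hmem.1 ht), indicator_of_notMem ht]

lemma Function.Periodic.integral_indicator_arc {F : ℝ → ℝ} (hF : Periodic F (2 * π))
    (a : ℝ) {h : ℝ} (h0 : 0 < h) (hπ : h < π) :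
    ∫ t in 0..2 * π, (arc a h).indicator F t = ∫ u in -h..h, F (u + a) := by
  set G := (arc 0 h).indicator fun u => F (u + a)
  have hshift : ∀ t, (arc a h).indicator F t = G (t - a) := fun t => by
    by_cases ht : t ∈ arc a h <;> simp_all [G, arc]
  have hG : Periodic G (2 * π) := (hF.add_const a).indicator_arc 0 h
  simp_rw [hshift]
  rw [intervalIntegral.integral_comp_sub_right G a, zero_sub,
    show 2 * π - a = -a + 2 * π by ring, hG.intervalIntegral_add_eq (-a) (-π),
    show -π + 2 * π = π by ring, intervalIntegral.integral_of_le (by linarith [pi_pos]),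
    intervalIntegral.integral_of_le (by linarith), integral_indicator (measurableSet_arc 0 h),
    Measure.restrict_restrict (measurableSet_arc 0 h), arc_zero_inter_Ioc h0 hπ,
    integral_Icc_eq_integral_Ioc]

lemma integral_indicator_arc_one (a : ℝ) {h : ℝ} (h0 : 0 < h) (hπ : h < π) :
    ∫ t in 0..2 * π, (arc a h).indicator 1 t = 2 * h := by
  rw [(show Periodic (1 : ℝ → ℝ) (2 * π) from fun _ => rfl).integral_indicator_arc a h0 hπ]
  simp
  ring

lemma integral_indicator_arc_sin {n : ℕ} (hn : n ≠ 0) (a c : ℝ) {h : ℝ} (h0 : 0 < h)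
    (hπ : h < π) :
    ∫ t in 0..2 * π, (arc a h).indicator (fun t => sin (n * t + c)) t
      = 2 * h * sinc (n * h) * sin (n * a + c) := by
  have hper : Periodic (fun t => sin (n * t + c)) (2 * π) := fun t => by
    simp only [show n * (t + 2 * π) + c = n * t + c + n * (2 * π) by ring, sin_add_nat_mul_two_pi]
  have hn' : (n : ℝ) ≠ 0 := Nat.cast_ne_zero.2 hn
  rw [hper.integral_indicator_arc a h0 hπ]
  simp only [show ∀ u, n * (u + a) + c = n * u + (n * a + c) from fun u => by ring]
  rw [intervalIntegral.integral_comp_mul_add (fun y => sin y) hn', integral_sin, cos_sub_cos,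
    sinc_of_ne_zero (mul_ne_zero hn' h0.ne'),
    show (n * -h + (n * a + c) + (n * h + (n * a + c))) / 2 = n * a + c by ring,
    show (n * -h + (n * a + c) - (n * h + (n * a + c))) / 2 = -(n * h) by ring, sin_neg,
    smul_eq_mul]
  field_simp

lemma intervalIntegrable_indicator_arc {F : ℝ → ℝ} (hF : Continuous F) (a h A B : ℝ) :
    IntervalIntegrable ((arc a h).indicator F) volume A B :=
  intervalIntegrable_iff.2 <|
    (intervalIntegrable_iff.1 (hF.intervalIntegrable A B)).indicator (measurableSet_arc a h)

noncomputable def arcDipole (n : ℕ) (h : ℝ) (t : ℝ) : ℝ :=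
  (4 * h)⁻¹ * ((arc 0 h).indicator 1 t - (arc (π / n) h).indicator 1 t)

lemma admPhi_arcDipole (n : ℕ) {h : ℝ} (h0 : 0 < h) (hπ : h < π) : AdmPhi (arcDipole n h) := by
  have hint (a : ℝ) : IntervalIntegrable ((arc a h).indicator 1) volume 0 (2 * π) :=
    intervalIntegrable_indicator_arc continuous_one a h 0 (2 * π)
  have hdip : IntervalIntegrable (arcDipole n h) volume 0 (2 * π) :=
    ((hint 0).sub (hint (π / n))).const_mul _
  refine ⟨fun t => ?_, ?_, ?_, ?_⟩
  · have hone : Periodic (1 : ℝ → ℝ) (2 * π) := fun _ => rfl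
    simp only [arcDipole, hone.indicator_arc _ h t]
  · exact (intervalIntegrable_iff_integrableOn_Ioc_of_le (by positivity)).1 hdip
  · simp only [arcDipole]
    rw [intervalIntegral.integral_const_mul, intervalIntegral.integral_sub (hint 0) (hint _),
      integral_indicator_arc_one _ h0 hπ, integral_indicator_arc_one _ h0 hπ, sub_self, mul_zero]
  · have hbound : ∀ t ∈ Icc 0 (2 * π), |arcDipole n h t|
        ≤ (4 * h)⁻¹ * ((arc 0 h).indicator 1 t + (arc (π / n) h).indicator 1 t) := by
      intro t _
      have h₁ : 0 ≤ (arc 0 h).indicator (1 : ℝ → ℝ) t := indicator_nonneg (by simp) t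
      have h₂ : 0 ≤ (arc (π / n) h).indicator (1 : ℝ → ℝ) t := indicator_nonneg (by simp) t
      rw [arcDipole, abs_mul, abs_of_pos (by positivity)]
      gcongr
      exact abs_sub_le_iff.2 ⟨by linarith, by linarith⟩
    calc (∫ t in 0..2 * π, |arcDipole n h t|)
        ≤ ∫ t in 0..2 * π, (4 * h)⁻¹ * ((arc 0 h).indicator 1 t + (arc (π / n) h).indicator 1 t) :=
          intervalIntegral.integral_mono_on (by positivity) hdip.abs
            (((hint 0).add (hint _)).const_mul _) hbound
      _ = 1 := by
          rw [intervalIntegral.integral_const_mul, intervalIntegral.integral_add (hint 0) (hint _),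
            integral_indicator_arc_one _ h0 hπ, integral_indicator_arc_one _ h0 hπ]
          field_simp
          ring

lemma integral_sin_mul_arcDipole {n : ℕ} (hn : n ≠ 0) {h : ℝ} (h0 : 0 < h) (hπ : h < π)
    (c : ℝ) : ∫ t in 0..2 * π, sin (n * t + c) * arcDipole n h t = sinc (n * h) * sin c := by
  have hsin : Continuous fun t : ℝ => sin (n * t + c) := by fun_prop
  have hsplit : ∀ t, sin (n * t + c) * arcDipole n h t = (4 * h)⁻¹ *
      ((arc 0 h).indicator (fun t => sin (n * t + c)) t
        - (arc (π / n) h).indicator (fun t => sin (n * t + c)) t) := fun t => by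
    simp only [arcDipole, indicator, Pi.one_apply]
    split_ifs <;> ring
  simp_rw [hsplit]
  rw [intervalIntegral.integral_const_mul,
    intervalIntegral.integral_sub (intervalIntegrable_indicator_arc hsin _ _ _ _)
      (intervalIntegrable_indicator_arc hsin _ _ _ _),
    integral_indicator_arc_sin hn _ _ h0 hπ, integral_indicator_arc_sin hn _ _ h0 hπ,
    mul_zero, zero_add, mul_div_cancel₀ π (Nat.cast_ne_zero.2 hn), add_comm π c, sin_add_pi]
  field_simp
  ring

lemma LpNormPer_const_mul (p : ℝ≥0∞) (k : ℝ) (f : ℝ → ℝ) :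
    LpNormPer p (fun x => k * f x) = |k| * LpNormPer p f := by
  rw [LpNormPer, LpNormPer, show (fun x => k * f x) = k • f from rfl, eLpNorm_const_smul,
    ENNReal.toReal_mul, toReal_enorm, norm_eq_abs]

lemma LpNormPer_le_of_abs_le_one (p : ℝ≥0∞) {f : ℝ → ℝ} (hf : ∀ x, |f x| ≤ 1) :
    LpNormPer p f ≤ LpNormPer p 1 :=
  ENNReal.toReal_mono (memLp_const (1 : ℝ)).eLpNorm_ne_top
    (eLpNorm_mono fun x => by simpa using hf x)

lemma AdmPhi.abs_integral_mul_le_one {φ : ℝ → ℝ} (hφ : AdmPhi φ) {K : ℝ → ℝ}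
    (hKm : Measurable K) (hK : ∀ t, |K t| ≤ 1) : |∫ t in 0..2 * π, K t * φ t| ≤ 1 := by
  have h2π : (0 : ℝ) ≤ 2 * π := by positivity
  have hφI : IntervalIntegrable φ volume 0 (2 * π) :=
    (intervalIntegrable_iff_integrableOn_Ioc_of_le h2π).2 hφ.2.1
  have hKφ : IntervalIntegrable (fun t => K t * φ t) volume 0 (2 * π) :=
    (intervalIntegrable_iff_integrableOn_Ioc_of_le h2π).2
      (hφ.2.1.bdd_mul hKm.aestronglyMeasurable (ae_of_all _ hK))
  calc |∫ t in 0..2 * π, K t * φ t| ≤ ∫ t in 0..2 * π, |K t * φ t| :=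
        intervalIntegral.abs_integral_le_integral_abs h2π
    _ ≤ ∫ t in 0..2 * π, |φ t| := by
        refine intervalIntegral.integral_mono_on h2π hKφ.abs hφI.abs fun t _ => ?_
        rw [abs_mul]
        exact mul_le_of_le_one_left (abs_nonneg _) (hK t)
    _ ≤ 1 := hφ.2.2.2

lemma le_Aq_of_admPhi (n : ℕ) (p : ℝ≥0∞) (βb : ℕ → ℝ) {φ : ℝ → ℝ} (hφ : AdmPhi φ) :
    LpNormPer p (fun x => sin ((2 * (n : ℝ) - 1) * x / 2) *
        ∫ t in 0..2 * π, sin (n * t - x / 2 + π * βb n / 2) * φ t) ≤ Aq n p βb := by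
  refine le_csSup ⟨LpNormPer p 1, ?_⟩ ⟨φ, hφ, rfl⟩
  rintro _ ⟨ψ, hψ, rfl⟩
  refine LpNormPer_le_of_abs_le_one p fun x => ?_
  rw [abs_mul]
  exact mul_le_one₀ (abs_sin_le_one _) (abs_nonneg _)
    (hψ.abs_integral_mul_le_one (by fun_prop) fun t => abs_sin_le_one _)

lemma abs_sinc_mul_le_Aq {n : ℕ} (hn : n ≠ 0) (p : ℝ≥0∞) (βb : ℕ → ℝ) {h : ℝ} (h0 : 0 < h)
    (hπ : h < π) :
    |sinc (n * h)| * LpNormPer p (fun x => sin ((2 * (n : ℝ) - 1) * x / 2) *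
        sin (-x / 2 + π * βb n / 2)) ≤ Aq n p βb := by
  have hkernel (x : ℝ) : ∫ t in 0..2 * π, sin (n * t - x / 2 + π * βb n / 2) * arcDipole n h t
      = sinc (n * h) * sin (-x / 2 + π * βb n / 2) := by
    simp_rw [← integral_sin_mul_arcDipole hn h0 hπ, sub_eq_add_neg (n * _ : ℝ), add_assoc,
      neg_div]
  calc _ = LpNormPer p (fun x => sinc (n * h) *
          (sin ((2 * (n : ℝ) - 1) * x / 2) * sin (-x / 2 + π * βb n / 2))) :=
        (LpNormPer_const_mul _ _ _).symm
    _ = LpNormPer p (fun x => sin ((2 * (n : ℝ) - 1) * x / 2) *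
          ∫ t in 0..2 * π, sin (n * t - x / 2 + π * βb n / 2) * arcDipole n h t) := by
        simp_rw [hkernel, mul_left_comm]
    _ ≤ Aq n p βb := le_Aq_of_admPhi n p βb (admPhi_arcDipole n h0 hπ)

lemma PhiF_eq_two_mul_sin_mul_sin (n : ℕ) (θ x : ℝ) :
    PhiF n θ x = 2 * (sin ((2 * (n : ℝ) - 1) * x / 2) * sin (-x / 2 + θ / 2)) := by
  have hsum : cos (n * x - θ / 2) * (1 - cos (x - θ)) - sin (n * x - θ / 2) * sin (x - θ)
      = cos (n * x - θ / 2) - cos (n * x - θ / 2 - (x - θ)) := by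
    rw [cos_sub (n * x - θ / 2)]; ring
  rw [PhiF, hsum, cos_sub_cos,
    show (n * x - θ / 2 + (n * x - θ / 2 - (x - θ))) / 2 = (2 * (n : ℝ) - 1) * x / 2 by ring,
    show (n * x - θ / 2 - (n * x - θ / 2 - (x - θ))) / 2 = -(-x / 2 + θ / 2) by ring, sin_neg]
  ring

/-- **Estimate (27).**
`A_n(p) ≥ ‖ sin((2n−1)x/2) sin(−x/2 + πβ_n/2) ‖_p = (1/2)‖Φ_{n,πβ_n}‖_p`. -/
theorem statement12 :
    ∀ (n : ℕ), 1 ≤ n → ∀ (p : ℝ≥0∞), 1 ≤ p → ∀ (βb : ℕ → ℝ),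
      LpNormPer p (fun x => Real.sin ((2*(n:ℝ) - 1) * x / 2) *
          Real.sin (-x/2 + π * βb n / 2)) ≤ Aq n p βb ∧
      LpNormPer p (fun x => Real.sin ((2*(n:ℝ) - 1) * x / 2) *
          Real.sin (-x/2 + π * βb n / 2)) = (1/2) * LpNormPer p (PhiF n (π * βb n)) := by
  intro n hn p _ βb
  refine ⟨?_, ?_⟩
  · have hsinc : Tendsto (fun h : ℝ => |sinc (n * h)|) (𝓝[>] 0) (𝓝 1) := by
      simpa using ((continuous_sinc.comp (continuous_const_mul (n : ℝ))).abs.tendsto 0).mono_left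
        nhdsWithin_le_nhds
    refine le_of_tendsto (by simpa using hsinc.mul_const _) ?_
    filter_upwards [Ioo_mem_nhdsGT pi_pos] with h hh
    exact abs_sinc_mul_le_Aq (Nat.one_le_iff_ne_zero.1 hn) p βb hh.1 hh.2
  · rw [funext (PhiF_eq_two_mul_sin_mul_sin n (π * βb n)), LpNormPer_const_mul,
      abs_two]
    ring
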